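/- In PG(3,2), the stabilizer G_2 of the twisted cubic acts on the 35 lines of PG(3,2) with exactly 6 orbits, of sizes 3, 1, 3, 4, 12, and 12. -/

import Mathlib

/-- Coordinate vectors of the points of the twisted cubic in `PG(3,2)`. -/
def cubicVecs2 : Set (Fin 4 → ZMod 2) :=
  {![0, 0, 0, 1], ![1, 1, 1, 1], ![1, 0, 0, 0]}

/-- The lines of `PG(3,2)`: `2`-dimensional subspaces of `F₂⁴`. -/
def Line2 : Type :=
  {W : Submodule (ZMod 2) (Fin 4 → ZMod 2) // Module.finrank (ZMod 2) W = 2}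

/-- The orbit of a line of `PG(3,2)` under the full stabilizer `G₂` of the twisted
cubic (over `F₂` points correspond to nonzero vectors, so a projectivity is an
invertible linear map `g`, fixing the cubic iff `g '' cubicVecs2 = cubicVecs2`). -/
def lineOrbit2 (l : Line2) : Set Line2 :=
  {l' | ∃ g : (Fin 4 → ZMod 2) ≃ₗ[ZMod 2] (Fin 4 → ZMod 2),
    (⇑g '' cubicVecs2 = cubicVecs2) ∧
    Submodule.map (g : (Fin 4 → ZMod 2) →ₗ[ZMod 2] (Fin 4 → ZMod 2)) l.1 = l'.1}

/-!
The three points of the cubic span the plane `π : x₁ = x₂`, whose other points are the three sums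
of two cubic points and their total `Q = (0:1:1:0)`. Every `g ∈ G₂` permutes the cubic, so it
preserves `π` and fixes `Q`; hence whether a line lies in `π`, passes through `Q`, or meets the
cubic is a `G₂`-invariant (`incidenceType`). It takes six values, and for each of them explicit
elements of `G₂` carry one representative line onto every line of that type, so the orbits are
exactly the six classes. Their sizes come from counting ordered bases: every line has six.
-/

open Module Submodule Finset

section ZModTwo

variable {M : Type*} [AddCommGroup M] [Module (ZMod 2) M]

theorem ZMod.two_eq_zero_or_one (x : ZMod 2) : x = 0 ∨ x = 1 := by
  revert x; decide

theorem mem_span_pair_zmod_two {x a b : M} :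
    x ∈ span (ZMod 2) {a, b} ↔ x = 0 ∨ x = a ∨ x = b ∨ x = a + b := by
  rw [mem_span_pair]
  constructor
  · rintro ⟨s, t, rfl⟩
    rcases s.two_eq_zero_or_one with rfl | rfl <;> rcases t.two_eq_zero_or_one with rfl | rfl <;>
      simp
  · rintro (rfl | rfl | rfl | rfl)
    exacts [⟨0, 0, by simp⟩, ⟨1, 0, by simp⟩, ⟨0, 1, by simp⟩, ⟨1, 1, by simp⟩]

instance [DecidableEq M] (a b : M) : DecidablePred (· ∈ span (ZMod 2) {a, b}) :=
  fun _ ↦ decidable_of_iff _ mem_span_pair_zmod_two.symm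

theorem linearIndependent_pair_zmod_two {a b : M} :
    LinearIndependent (ZMod 2) ![a, b] ↔ a ≠ 0 ∧ b ≠ 0 ∧ a ≠ b := by
  by_cases ha : a = 0
  · subst ha
    simpa using fun h ↦ h.ne_zero 0 rfl
  rw [LinearIndependent.pair_iff' ha]
  refine ⟨fun h ↦ ⟨ha, by simpa [eq_comm] using h 0, by simpa using h 1⟩, fun ⟨_, hb, hab⟩ s ↦ ?_⟩
  rcases s.two_eq_zero_or_one with rfl | rfl <;> simp [Ne.symm hb, hab]

instance [DecidableEq M] (a b : M) : Decidable (LinearIndependent (ZMod 2) ![a, b]) :=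
  decidable_of_iff _ linearIndependent_pair_zmod_two.symm

theorem finrank_span_pair {a b : M} (h : LinearIndependent (ZMod 2) ![a, b]) :
    finrank (ZMod 2) (span (ZMod 2) {a, b}) = 2 := by
  have := finrank_span_eq_card h
  rwa [Matrix.range_cons_cons_empty] at this

theorem span_pair_eq_iff {W : Submodule (ZMod 2) M} (hW : finrank (ZMod 2) W = 2) {a b : M}
    (h : LinearIndependent (ZMod 2) ![a, b]) : span (ZMod 2) {a, b} = W ↔ a ∈ W ∧ b ∈ W := by
  refine ⟨fun hab ↦ hab ▸ ⟨subset_span (by simp), subset_span (by simp)⟩, fun ⟨ha, hb⟩ ↦ ?_⟩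
  have : FiniteDimensional (ZMod 2) W := .of_finrank_eq_succ hW
  exact eq_of_le_of_finrank_eq (span_le.2 (Set.insert_subset ha (by simpa using hb)))
    ((finrank_span_pair h).trans hW.symm)

theorem exists_span_pair_eq {W : Submodule (ZMod 2) M} (hW : finrank (ZMod 2) W = 2) :
    ∃ a b : M, LinearIndependent (ZMod 2) ![a, b] ∧ span (ZMod 2) {a, b} = W := by
  have : FiniteDimensional (ZMod 2) W := .of_finrank_eq_succ hW
  let B := finBasisOfFinrankEq (ZMod 2) W hW
  have hB : LinearIndependent (ZMod 2) ![(B 0 : M), B 1] :=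
    linearIndependent_pair_zmod_two.2 ⟨by simpa using B.ne_zero 0, by simpa using B.ne_zero 1,
      fun h ↦ by simpa using B.injective (Subtype.ext h)⟩
  exact ⟨B 0, B 1, hB, (span_pair_eq_iff hW hB).2 ⟨(B 0).2, (B 1).2⟩⟩

variable [Fintype M] [DecidableEq M]

theorem card_filter_span_pair_eq {W : Submodule (ZMod 2) M} (hW : finrank (ZMod 2) W = 2) :
    #{p : M × M | LinearIndependent (ZMod 2) ![p.1, p.2] ∧ span (ZMod 2) {p.1, p.2} = W} = 6 := by
  classical
  have hcard : #(W : Set M).toFinset = 4 := by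
    have : Fintype.card W = 4 := by rw [card_eq_pow_finrank (K := ZMod 2), hW]; rfl
    simpa using this
  have hfilter : ({p : M × M | LinearIndependent (ZMod 2) ![p.1, p.2] ∧
      span (ZMod 2) {p.1, p.2} = W} : Finset (M × M)) = ((W : Set M).toFinset.erase 0).offDiag := by
    ext ⟨a, b⟩
    simp only [mem_filter, mem_univ, true_and, mem_offDiag, mem_erase, Set.mem_toFinset,
      SetLike.mem_coe]
    constructor
    · rintro ⟨h, hab⟩
      obtain ⟨ha, hb, hne⟩ := linearIndependent_pair_zmod_two.1 h
      obtain ⟨haW, hbW⟩ := (span_pair_eq_iff hW h).1 hab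
      exact ⟨⟨ha, haW⟩, ⟨hb, hbW⟩, hne⟩
    · rintro ⟨⟨ha, haW⟩, ⟨hb, hbW⟩, hne⟩
      have h := linearIndependent_pair_zmod_two.2 ⟨ha, hb, hne⟩
      exact ⟨h, (span_pair_eq_iff hW h).2 ⟨haW, hbW⟩⟩
  rw [hfilter, offDiag_card, card_erase_of_mem (by simp), hcard]

theorem card_filter_span_pair_mem (S : Finset (Submodule (ZMod 2) M))
    (hS : ∀ W ∈ S, finrank (ZMod 2) W = 2) :
    #{p : M × M | LinearIndependent (ZMod 2) ![p.1, p.2] ∧ span (ZMod 2) {p.1, p.2} ∈ S}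
      = 6 * #S := by
  classical
  rw [card_eq_sum_card_fiberwise (f := fun p : M × M ↦ span (ZMod 2) {p.1, p.2}) (t := S)
    (fun p hp ↦ (mem_filter.1 hp).2.2), mul_comm, ← smul_eq_mul, ← sum_const]
  refine sum_congr rfl fun W hW ↦ ?_
  rw [filter_filter, ← card_filter_span_pair_eq (hS W hW)]
  congr 1
  refine filter_congr fun p _ ↦ ⟨fun h ↦ ⟨h.1.1, h.2⟩, fun h ↦ ⟨⟨h.1, h.2 ▸ hW⟩, h.2⟩⟩

end ZModTwo

section IncidenceType

variable {R M : Type*} [Ring R] [AddCommGroup M] [Module R M]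

instance (a b : M) (W : Submodule R M) [DecidablePred (· ∈ W)] :
    Decidable (span R {a, b} ≤ W) :=
  decidable_of_iff (a ∈ W ∧ b ∈ W) <| by
    rw [span_le, Set.insert_subset_iff, Set.singleton_subset_iff]; rfl

open scoped Classical in
noncomputable def incidenceType (C : Finset M) (W : Submodule R M) : Bool × Bool × Bool :=
  (decide (W ≤ span R C), decide (∑ c ∈ C, c ∈ W), decide (∃ c ∈ C, c ∈ W))

theorem incidenceType_map (C : Finset M) (W : Submodule R M) {g : M ≃ₗ[R] M} (hg : g '' C = C) :
    incidenceType C (W.map (g : M →ₗ[R] M)) = incidenceType C W := by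
  classical
  have hC : C.image g.symm = C := by
    rw [← coe_inj, coe_image]
    conv_lhs => rw [← hg]
    simp [Set.image_image]
  simp only [incidenceType, Prod.mk.injEq, decide_eq_decide, Submodule.mem_map_equiv]
  refine ⟨?_, ?_, ?_⟩
  · rw [map_le_iff_le_comap, comap_equiv_eq_map_symm, map_span, LinearEquiv.coe_coe, ← coe_image,
      hC]
  · conv_rhs => rw [← hC, sum_image g.symm.injective.injOn]
    rw [map_sum]
  · conv_rhs => rw [← hC, exists_mem_image]

end IncidenceType

open Matrix

local notation "V" => Fin 4 → ZMod 2

def cubic : Finset V := {![0, 0, 0, 1], ![1, 1, 1, 1], ![1, 0, 0, 0]}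

theorem coe_cubic : (cubic : Set V) = cubicVecs2 := by
  simp [cubic, cubicVecs2]

theorem mem_span_cubic {x : V} : x ∈ span (ZMod 2) (cubic : Set V) ↔ x 1 = x 2 := by
  constructor
  · intro hx
    refine span_induction (p := fun y _ ↦ y 1 = y 2) ?_ rfl ?_ ?_ hx
    · simp only [cubic, coe_insert, coe_singleton, Set.mem_insert_iff, Set.mem_singleton_iff]
      rintro y (rfl | rfl | rfl) <;> rfl
    · intro y z _ _ hy hz
      simp [hy, hz]
    · intro s y _ hy
      simp [hy]
  · intro hx
    have hdecomp : x =
        (x 0 + x 1) • ![1, 0, 0, 0] + x 1 • ![1, 1, 1, 1] + (x 3 + x 1) • ![0, 0, 0, 1] := by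
      revert x; decide
    rw [hdecomp]
    refine add_mem (add_mem (smul_mem _ _ (subset_span ?_)) (smul_mem _ _ (subset_span ?_)))
      (smul_mem _ _ (subset_span ?_)) <;> simp [cubic]

instance : DecidablePred (· ∈ span (ZMod 2) (cubic : Set V)) :=
  fun _ ↦ decidable_of_iff _ mem_span_cubic.symm

def pairType (a b : V) : Bool × Bool × Bool :=
  (decide (span (ZMod 2) {a, b} ≤ span (ZMod 2) (cubic : Set V)),
    decide (∑ c ∈ cubic, c ∈ span (ZMod 2) {a, b}), decide (∃ c ∈ cubic, c ∈ span (ZMod 2) {a, b}))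

theorem incidenceType_span_pair (a b : V) :
    incidenceType cubic (span (ZMod 2) {a, b}) = pairType a b := by
  simp only [incidenceType, pairType, Prod.mk.injEq, decide_eq_decide, iff_self, and_self]

def cubicPt : Fin 3 → V := ![![1, 0, 0, 0], ![1, 1, 1, 1], ![0, 0, 0, 1]]

/-- The element of `G₂` permuting the cubic points `cubicPt` by `σ` and sending `e₁ ↦ v`; it must
send `e₂ = e₁ + Q` to `v + Q`, since `g` fixes `Q`. -/
def g2Matrix (σ : Equiv.Perm (Fin 3)) (v : V) : Matrix (Fin 4) (Fin 4) (ZMod 2) :=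
  (of ![cubicPt (σ 0), v, v + ∑ c ∈ cubic, c, cubicPt (σ 2)])ᵀ

theorem g2Matrix_mulVec_eq_zero : ∀ (σ : Equiv.Perm (Fin 3)) (v : V),
    v ∉ span (ZMod 2) (cubic : Set V) → ∀ x, g2Matrix σ v *ᵥ x = 0 → x = 0 := by
  decide +kernel

theorem image_cubic_g2Matrix : ∀ (σ : Equiv.Perm (Fin 3)) (v : V),
    v ∉ span (ZMod 2) (cubic : Set V) → cubic.image (g2Matrix σ v *ᵥ ·) = cubic := by
  decide +kernel

theorem mem_lineOrbit2_of_mulVec {A : Matrix (Fin 4) (Fin 4) (ZMod 2)}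
    (hker : ∀ x, A *ᵥ x = 0 → x = 0) (hA : cubic.image (A *ᵥ ·) = cubic) {l l' : Line2}
    (hl : l'.1 ≤ l.1.map A.mulVecLin) : l' ∈ lineOrbit2 l := by
  let g := LinearEquiv.ofInjectiveEndo A.mulVecLin ((injective_iff_map_eq_zero _).2 hker)
  refine ⟨g, ?_, (eq_of_le_of_finrank_eq hl ?_).symm⟩
  · rw [← coe_cubic, ← coe_image]
    exact congrArg _ hA
  · exact l'.2.trans ((LinearEquiv.finrank_map_eq g l.1).trans l.2).symm

theorem mem_lineOrbit2_refl (l : Line2) : l ∈ lineOrbit2 l :=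
  ⟨LinearEquiv.refl _ _, Set.image_id _, Submodule.map_id _⟩

theorem mem_lineOrbit2_symm {l l' : Line2} (h : l' ∈ lineOrbit2 l) : l ∈ lineOrbit2 l' := by
  obtain ⟨g, hg, hl⟩ := h
  refine ⟨g.symm, ?_, (map_symm_eq_iff g).2 hl⟩
  conv_lhs => rw [← hg]
  simp [Set.image_image]

theorem mem_lineOrbit2_trans {l l' l'' : Line2} (h : l' ∈ lineOrbit2 l)
    (h' : l'' ∈ lineOrbit2 l') : l'' ∈ lineOrbit2 l := by
  obtain ⟨g, hg, hl⟩ := h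
  obtain ⟨g', hg', hl'⟩ := h'
  refine ⟨g.trans g', ?_, ?_⟩
  · change (g' ∘ g) '' _ = _
    rw [Set.image_comp, hg, hg']
  · rw [LinearEquiv.coe_trans, Submodule.map_comp, hl, hl']

theorem lineOrbit2_eq_of_mem {l l' : Line2} (h : l' ∈ lineOrbit2 l) :
    lineOrbit2 l' = lineOrbit2 l :=
  Set.ext fun _ ↦ ⟨mem_lineOrbit2_trans h, mem_lineOrbit2_trans (mem_lineOrbit2_symm h)⟩

theorem incidenceType_eq_of_mem_lineOrbit2 {l l' : Line2} (h : l' ∈ lineOrbit2 l) :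
    incidenceType cubic l'.1 = incidenceType cubic l.1 := by
  obtain ⟨g, hg, hl⟩ := h
  rw [← hl, incidenceType_map _ _ (by rwa [coe_cubic])]

/-- Representatives of the six orbits: the lines of `π` through `Q`, the line of `π` missing the
cubic, the chords, and the lines outside `π` through `Q`, through a cubic point, and through the
sum of two cubic points. -/
def repPair : Fin 6 → V × V :=
  ![(![1, 0, 0, 0], ![0, 1, 1, 0]), (![1, 1, 1, 0], ![1, 0, 0, 1]), (![1, 0, 0, 0], ![0, 0, 0, 1]),
    (![0, 1, 0, 0], ![0, 0, 1, 0]), (![1, 0, 0, 0], ![0, 1, 0, 0]), (![0, 1, 0, 0], ![1, 0, 1, 0])]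

theorem linearIndependent_repPair (k : Fin 6) :
    LinearIndependent (ZMod 2) ![(repPair k).1, (repPair k).2] := by
  revert k; decide

def rep (k : Fin 6) : Line2 :=
  ⟨span (ZMod 2) {(repPair k).1, (repPair k).2}, finrank_span_pair (linearIndependent_repPair k)⟩

theorem pairType_repPair_injective : ∀ i j : Fin 6,
    pairType (repPair i).1 (repPair i).2 = pairType (repPair j).1 (repPair j).2 → i = j := by
  decide +kernel

theorem exists_pairType_eq_repPair : ∀ a b : V, LinearIndependent (ZMod 2) ![a, b] →
    ∃ k, pairType a b = pairType (repPair k).1 (repPair k).2 := by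
  decide +kernel

theorem exists_g2Matrix_of_pairType_eq : ∀ (k : Fin 6) (a b : V),
    LinearIndependent (ZMod 2) ![a, b] → pairType a b = pairType (repPair k).1 (repPair k).2 →
    ∃ (σ : Equiv.Perm (Fin 3)) (v : V), v ∉ span (ZMod 2) (cubic : Set V) ∧
      span (ZMod 2) {a, b} ≤
        span (ZMod 2) {g2Matrix σ v *ᵥ (repPair k).1, g2Matrix σ v *ᵥ (repPair k).2} := by
  decide +kernel

theorem card_filter_pairType_eq : ∀ k : Fin 6,
    #{p : V × V | LinearIndependent (ZMod 2) ![p.1, p.2] ∧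
      pairType p.1 p.2 = pairType (repPair k).1 (repPair k).2} = 6 * ![3, 1, 3, 4, 12, 12] k := by
  decide +kernel

theorem card_filter_linearIndependent :
    #{p : V × V | LinearIndependent (ZMod 2) ![p.1, p.2]} = 6 * 35 := by
  decide +kernel

theorem incidenceType_rep (k : Fin 6) :
    incidenceType cubic (rep k).1 = pairType (repPair k).1 (repPair k).2 :=
  incidenceType_span_pair _ _

theorem lineOrbit2_rep (k : Fin 6) :
    lineOrbit2 (rep k) = {l | incidenceType cubic l.1 = incidenceType cubic (rep k).1} := by
  ext l
  refine ⟨incidenceType_eq_of_mem_lineOrbit2, fun h ↦ ?_⟩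
  obtain ⟨a, b, hab, hl⟩ := exists_span_pair_eq l.2
  rw [Set.mem_ofPred_eq, ← hl, incidenceType_span_pair, incidenceType_rep] at h
  obtain ⟨σ, v, hv, hle⟩ := exists_g2Matrix_of_pairType_eq k a b hab h
  refine mem_lineOrbit2_of_mulVec (g2Matrix_mulVec_eq_zero σ v hv) (image_cubic_g2Matrix σ v hv) ?_
  rw [← hl]
  change _ ≤ (span _ _).map _
  rwa [map_span, Set.image_pair]

theorem exists_lineOrbit2_eq_rep (l : Line2) : ∃ k, lineOrbit2 l = lineOrbit2 (rep k) := by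
  obtain ⟨a, b, hab, hl⟩ := exists_span_pair_eq l.2
  obtain ⟨k, hk⟩ := exists_pairType_eq_repPair a b hab
  refine ⟨k, lineOrbit2_eq_of_mem ?_⟩
  rw [lineOrbit2_rep, Set.mem_ofPred_eq, ← hl, incidenceType_span_pair, incidenceType_rep, hk]

theorem lineOrbit2_rep_injective : Function.Injective (lineOrbit2 ∘ rep) := by
  intro i j h
  have hi : rep i ∈ lineOrbit2 (rep j) := (congrFun h (rep i)).mp (mem_lineOrbit2_refl (rep i))
  apply pairType_repPair_injective
  rw [← incidenceType_rep, ← incidenceType_rep]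
  exact incidenceType_eq_of_mem_lineOrbit2 hi

theorem six_mul_ncard_setOf (P : Submodule (ZMod 2) V → Prop) [DecidablePred P] :
    6 * {l : Line2 | P l.1}.ncard =
      #{p : V × V | LinearIndependent (ZMod 2) ![p.1, p.2] ∧ P (span (ZMod 2) {p.1, p.2})} := by
  classical
  have := Fintype.ofFinite (Submodule (ZMod 2) V)
  let S : Finset (Submodule (ZMod 2) V) := {W | finrank (ZMod 2) W = 2 ∧ P W}
  have hS : {l : Line2 | P l.1}.ncard = #S := by
    unfold Line2
    have hpre : {l : {W : Submodule (ZMod 2) V // finrank (ZMod 2) W = 2} | P l.1} =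
        Subtype.val ⁻¹' (S : Set (Submodule (ZMod 2) V)) := by
      ext l
      simp only [Set.mem_ofPred_eq, Set.mem_preimage, coe_filter, mem_univ, true_and, S]
      exact (and_iff_right l.2).symm
    rw [hpre, Set.ncard_preimage_of_injective_subset_range Subtype.val_injective,
      Set.ncard_coe_finset]
    intro W hW
    exact ⟨⟨W, (mem_filter.1 hW).2.1⟩, rfl⟩
  rw [hS, ← card_filter_span_pair_mem S fun W hW ↦ (mem_filter.1 hW).2.1]
  refine congrArg card (filter_congr fun p _ ↦ ?_)
  simp only [S, mem_filter, mem_univ, true_and]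
  exact and_congr_right fun h ↦ (and_iff_right (finrank_span_pair h))

theorem ncard_lineOrbit2_rep (k : Fin 6) :
    (lineOrbit2 (rep k)).ncard = ![3, 1, 3, 4, 12, 12] k := by
  refine Nat.eq_of_mul_eq_mul_left (by norm_num : 0 < 6) ?_
  rw [lineOrbit2_rep, ← card_filter_pairType_eq k]
  refine (six_mul_ncard_setOf (incidenceType cubic · = incidenceType cubic (rep k).1)).trans
    (congrArg card (filter_congr fun p _ ↦ ?_))
  rw [incidenceType_span_pair, incidenceType_rep]

theorem card_Line2 : Nat.card Line2 = 35 := by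
  have h := six_mul_ncard_setOf fun _ ↦ True
  simp only [Set.ofPred_true, Set.ncard_univ, and_true, card_filter_linearIndependent] at h
  omega

/-- In `PG(3,2)`, the stabilizer `G₂` of the twisted cubic acts on the `35` lines of
`PG(3,2)` with exactly `6` orbits, of sizes `3, 1, 3, 4, 12, 12`. -/
theorem line_orbits_PG32 :
    Nat.card Line2 = 35 ∧
    ∃ O₁ O₂ O₃ O₄ O₅ O₆ : Set Line2,
      ([O₁, O₂, O₃, O₄, O₅, O₆] : List (Set Line2)).Pairwise (· ≠ ·) ∧
      (∀ O ∈ ([O₁, O₂, O₃, O₄, O₅, O₆] : List (Set Line2)), ∃ l, lineOrbit2 l = O) ∧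
      O₁.ncard = 3 ∧ O₂.ncard = 1 ∧ O₃.ncard = 3 ∧ O₄.ncard = 4 ∧
      O₅.ncard = 12 ∧ O₆.ncard = 12 ∧
      ∀ l, lineOrbit2 l ∈ ({O₁, O₂, O₃, O₄, O₅, O₆} : Set (Set Line2)) := by
  refine ⟨card_Line2, _, _, _, _, _, _, ?_, ?_, ncard_lineOrbit2_rep 0, ncard_lineOrbit2_rep 1,
    ncard_lineOrbit2_rep 2, ncard_lineOrbit2_rep 3, ncard_lineOrbit2_rep 4, ncard_lineOrbit2_rep 5,
    fun l ↦ ?_⟩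
  · exact List.pairwise_ofFn.2 fun i j hij ↦ lineOrbit2_rep_injective.ne hij.ne
  · simp only [List.mem_cons, List.not_mem_nil, or_false]
    rintro O (rfl | rfl | rfl | rfl | rfl | rfl) <;> exact ⟨_, rfl⟩
  · obtain ⟨k, hk⟩ := exists_lineOrbit2_eq_rep l
    rw [hk]
    fin_cases k <;> simp
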